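/- arXiv:1003.4092 — 2 statements merged into one kernel-verified Lean document; each statement's English description precedes it below -/
import Mathlib

section
/- For every a > 0 there exists a constant d' = d'_a, depending only on a and the dimension n, such that for every admissible ball B(x,r) ∈ 𝓑_a one has γ(B(x,2r)) ≤ d' γ(B(x,r)). -/
open MeasureTheory Metric Set
open scoped ENNReal NNReal BigOperators

noncomputable section

/-- The gaussian measure `dγ(x) = (2π)^{-n/2} exp(-|x|²/2) dx` on `ℝⁿ`. -/
def gaussMeasure (n : ℕ) : Measure (EuclideanSpace ℝ (Fin n)) :=
  volume.withDensity fun x =>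
    ENNReal.ofReal ((2 * Real.pi) ^ (-(n : ℝ) / 2) * Real.exp (-‖x‖ ^ 2 / 2))

/-- `m(x) = min {1, 1/‖x‖}`. -/
def mfun {n : ℕ} (x : EuclideanSpace ℝ (Fin n)) : ℝ :=
  if ‖x‖ ≤ 1 then 1 else ‖x‖⁻¹

/-- Ornstein–Uhlenbeck (Mehler) semigroup `e^{-tL} u (x)`. -/
def mehler (n : ℕ) (u : EuclideanSpace ℝ (Fin n) → ℝ) (t : ℝ)
    (x : EuclideanSpace ℝ (Fin n)) : ℝ :=
  ∫ y, u (Real.exp (-t) • x + Real.sqrt (1 - Real.exp (-2 * t)) • y) ∂gaussMeasure n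

/-- The gaussian conical square function `S_a u (x)`. -/
def Sfun (n : ℕ) (a : ℝ) (u : EuclideanSpace ℝ (Fin n) → ℝ)
    (x : EuclideanSpace ℝ (Fin n)) : ℝ≥0∞ :=
  (∫⁻ t in Set.Ioo (0 : ℝ) (a * mfun x),
      (∫⁻ y in ball x t,
        (gaussMeasure n (ball y t))⁻¹ *
          ENNReal.ofReal ((t * ‖fderiv ℝ (mehler n u (t ^ 2)) y‖) ^ 2) ∂gaussMeasure n) /
        ENNReal.ofReal t) ^ (1 / 2 : ℝ)

/-- The gaussian non-tangential maximal function `T*_{(A,a)} u (x)`. -/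
def Tstar (n : ℕ) (A a : ℝ) (u : EuclideanSpace ℝ (Fin n) → ℝ)
    (x : EuclideanSpace ℝ (Fin n)) : ℝ≥0∞ :=
  ⨆ (y : EuclideanSpace ℝ (Fin n)) (t : ℝ) (_ : dist y x < A * t) (_ : 0 < t)
      (_ : t < a * mfun x),
    ((gaussMeasure n (ball y (A * t)))⁻¹ *
        ∫⁻ z in ball y (A * t), ENNReal.ofReal ((mehler n u (t ^ 2) z) ^ 2) ∂gaussMeasure n) ^
      (1 / 2 : ℝ)

/-- The admissible (gaussian) Hardy–Littlewood maximal function `M*_a f (x)`. -/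
def Mstar (n : ℕ) (a : ℝ) (f : EuclideanSpace ℝ (Fin n) → ℝ)
    (x : EuclideanSpace ℝ (Fin n)) : ℝ≥0∞ :=
  ⨆ (r : ℝ) (_ : 0 < r) (_ : r ≤ a * mfun x),
    (gaussMeasure n (ball x r))⁻¹ *
      ∫⁻ y in ball x r, ENNReal.ofReal |f y| ∂gaussMeasure n

/-- The admissible cone `Γ^{(A,a)}_x(γ)`. -/
def cone (n : ℕ) (A a : ℝ) (x : EuclideanSpace ℝ (Fin n)) :
    Set (EuclideanSpace ℝ (Fin n) × ℝ) :=
  {p | dist p.1 x < A * p.2 ∧ 0 < p.2 ∧ p.2 < a * mfun x}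

/-- The modified admissible cone `Γ̃^{(A,a)}_x(γ)`. -/
def coneT (n : ℕ) (A a : ℝ) (x : EuclideanSpace ℝ (Fin n)) :
    Set (EuclideanSpace ℝ (Fin n) × ℝ) :=
  {p | dist p.1 x < A * p.2 ∧ 0 < p.2 ∧ p.2 < a * mfun p.1}

/-- The dyadic cube `2^{-k}(v + [0,1)ⁿ)` of scale `k`. -/
def dyadicCube (n k : ℕ) (v : Fin n → ℤ) : Set (EuclideanSpace ℝ (Fin n)) :=
  {x | ∀ i, x i ∈ Set.Ico ((2 : ℝ) ^ (-(k : ℤ)) * v i) ((2 : ℝ) ^ (-(k : ℤ)) * (v i + 1))}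

/-- The centre of the dyadic cube `2^{-k}(v + [0,1)ⁿ)`. -/
def cubeCenter (n k : ℕ) (v : Fin n → ℤ) : EuclideanSpace ℝ (Fin n) :=
  WithLp.toLp 2 (fun i => (2 : ℝ) ^ (-(k : ℤ)) * (v i + 1 / 2))

/-- The layers `L_0 = [-1,1)ⁿ`, `L_l = [-2^l,2^l)ⁿ \ [-2^{l-1},2^{l-1})ⁿ`. -/
def layer (n : ℕ) : ℕ → Set (EuclideanSpace ℝ (Fin n))
  | 0 => {x | ∀ i, x i ∈ Set.Ico (-1 : ℝ) 1}
  | (l + 1) =>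
      {x | ∀ i, x i ∈ Set.Ico (-(2 : ℝ) ^ (l + 1)) ((2 : ℝ) ^ (l + 1))} \
        {x | ∀ i, x i ∈ Set.Ico (-(2 : ℝ) ^ l) ((2 : ℝ) ^ l)}

/-- The cube `α ∘ Q` with the same centre as `Q = 2^{-k}(v + [0,1)ⁿ)` and `α` times
its side-length. -/
def scaledCube (n k : ℕ) (v : Fin n → ℤ) (α : ℝ) : Set (EuclideanSpace ℝ (Fin n)) :=
  {x | ∀ i, x i ∈ Set.Ico (cubeCenter n k v i - α * (2 : ℝ) ^ (-(k : ℤ)) / 2)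
      (cubeCenter n k v i + α * (2 : ℝ) ^ (-(k : ℤ)) / 2)}

/-- The Ornstein–Uhlenbeck operator `Lf(x) = -Δf(x) + x·∇f(x)`. -/
def OU (n : ℕ) (f : EuclideanSpace ℝ (Fin n) → ℂ) (x : EuclideanSpace ℝ (Fin n)) : ℂ :=
  -(∑ i : Fin n, iteratedFDeriv ℝ 2 f x ![EuclideanSpace.single i 1, EuclideanSpace.single i 1]) +
    fderiv ℝ f x x


/-!
On an admissible ball `B(x, 2r)` one has `r ≤ a` and `r‖x‖ ≤ a`, hence
`|‖y‖² - ‖x‖²| ≤ 4r‖x‖ + 4r² ≤ 4a + 4a²`: the gaussian density stays within a factor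
`e^{2a + 2a²}` of its value at the centre `x`. Comparing both balls with that central value,
doubling reduces to the doubling constant `2ⁿ` of Lebesgue measure, giving `d' = 2ⁿ e^{4a + 4a²}`.
-/

section Doubling

variable {E : Type*} [NormedAddCommGroup E] [NormedSpace ℝ E] [MeasurableSpace E] [BorelSpace E]
  [FiniteDimensional ℝ E] (μ : Measure E) [μ.IsAddHaarMeasure]

theorem withDensity_ball_two_mul_le {f : E → ℝ≥0∞} (hf : Measurable f) {x : E} {r : ℝ}
    {C : ℝ≥0∞} (hupper : ∀ y ∈ ball x (2 * r), f y ≤ C * f x)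
    (hlower : ∀ y ∈ ball x r, f x ≤ C * f y) :
    μ.withDensity f (ball x (2 * r)) ≤
      2 ^ Module.finrank ℝ E * C ^ 2 * μ.withDensity f (ball x r) := by
  have hball : μ (ball x (2 * r)) = 2 ^ Module.finrank ℝ E * μ (ball x r) := by
    rw [Measure.addHaar_ball_mul_of_pos μ x two_pos, ← Measure.addHaar_ball_center μ x,
      ENNReal.ofReal_pow zero_le_two, ENNReal.ofReal_ofNat]
  have hcentre : f x * μ (ball x r) ≤ C * ∫⁻ y in ball x r, f y ∂μ :=
    calc f x * μ (ball x r) = ∫⁻ _ in ball x r, f x ∂μ := (setLIntegral_const _ _).symm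
      _ ≤ ∫⁻ y in ball x r, C * f y ∂μ := setLIntegral_mono' measurableSet_ball hlower
      _ = C * ∫⁻ y in ball x r, f y ∂μ := lintegral_const_mul C hf
  rw [withDensity_apply _ measurableSet_ball, withDensity_apply _ measurableSet_ball]
  calc ∫⁻ y in ball x (2 * r), f y ∂μ ≤ ∫⁻ _ in ball x (2 * r), C * f x ∂μ :=
        setLIntegral_mono' measurableSet_ball hupper
    _ = 2 ^ Module.finrank ℝ E * C * (f x * μ (ball x r)) := by
        rw [setLIntegral_const, hball]; ring
    _ ≤ 2 ^ Module.finrank ℝ E * C * (C * ∫⁻ y in ball x r, f y ∂μ) := by gcongr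
    _ = 2 ^ Module.finrank ℝ E * C ^ 2 * ∫⁻ y in ball x r, f y ∂μ := by ring

end Doubling

theorem abs_sq_norm_sub_sq_norm_le {F : Type*} [SeminormedAddCommGroup F] (x y : F) :
    |‖y‖ ^ 2 - ‖x‖ ^ 2| ≤ ‖y - x‖ * (‖y - x‖ + 2 * ‖x‖) := by
  have hdiff : |‖y‖ - ‖x‖| ≤ ‖y - x‖ := abs_norm_sub_norm_le y x
  have hsum : ‖y‖ + ‖x‖ ≤ ‖y - x‖ + 2 * ‖x‖ := by
    linarith [norm_le_norm_sub_add y x]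
  calc |‖y‖ ^ 2 - ‖x‖ ^ 2| = |‖y‖ - ‖x‖| * (‖y‖ + ‖x‖) := by
        rw [sq_sub_sq, abs_mul, abs_of_nonneg (by positivity : 0 ≤ ‖y‖ + ‖x‖), mul_comm]
    _ ≤ ‖y - x‖ * (‖y - x‖ + 2 * ‖x‖) := by gcongr

theorem exp_neg_sq_norm_half_le {F : Type*} [SeminormedAddCommGroup F] (x y : F) :
    Real.exp (-‖y‖ ^ 2 / 2) ≤ Real.exp (|‖y‖ ^ 2 - ‖x‖ ^ 2| / 2) * Real.exp (-‖x‖ ^ 2 / 2) := by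
  rw [← Real.exp_add, Real.exp_le_exp]
  linarith [neg_abs_le (‖y‖ ^ 2 - ‖x‖ ^ 2)]

theorem gaussMeasure_ball_two_mul_le {n : ℕ} (x : EuclideanSpace ℝ (Fin n)) (r K : ℝ)
    (hK : ∀ y ∈ ball x (2 * r), |‖y‖ ^ 2 - ‖x‖ ^ 2| / 2 ≤ K) :
    gaussMeasure n (ball x (2 * r)) ≤
      ENNReal.ofReal (2 ^ n * Real.exp (2 * K)) * gaussMeasure n (ball x r) := by
  set c : ℝ := (2 * Real.pi) ^ (-(n : ℝ) / 2)
  have hc : 0 ≤ c := by positivity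
  have hdensity : ∀ y z : EuclideanSpace ℝ (Fin n), |‖y‖ ^ 2 - ‖z‖ ^ 2| / 2 ≤ K →
      ENNReal.ofReal (c * Real.exp (-‖y‖ ^ 2 / 2)) ≤
        ENNReal.ofReal (Real.exp K) * ENNReal.ofReal (c * Real.exp (-‖z‖ ^ 2 / 2)) := by
    intro y z hyz
    rw [← ENNReal.ofReal_mul (Real.exp_pos K).le]
    refine ENNReal.ofReal_le_ofReal ?_
    calc c * Real.exp (-‖y‖ ^ 2 / 2)
        ≤ c * (Real.exp (|‖y‖ ^ 2 - ‖z‖ ^ 2| / 2) * Real.exp (-‖z‖ ^ 2 / 2)) := by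
          gcongr; exact exp_neg_sq_norm_half_le z y
      _ ≤ Real.exp K * (c * Real.exp (-‖z‖ ^ 2 / 2)) := by
          rw [mul_left_comm]; gcongr
  have hconst : ENNReal.ofReal (2 ^ n * Real.exp (2 * K)) =
      2 ^ Module.finrank ℝ (EuclideanSpace ℝ (Fin n)) * ENNReal.ofReal (Real.exp K) ^ 2 := by
    rw [finrank_euclideanSpace_fin, ← ENNReal.ofReal_pow (Real.exp_pos K).le, ← Real.exp_nat_mul,
      ENNReal.ofReal_mul (by positivity), ENNReal.ofReal_pow zero_le_two, ENNReal.ofReal_ofNat]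
    norm_num
  rw [hconst]
  refine withDensity_ball_two_mul_le volume (by fun_prop) (fun y hy => hdensity y x (hK y hy))
    fun y hy => hdensity x y ?_
  rw [abs_sub_comm]
  refine hK y (ball_subset_ball ?_ hy)
  linarith [dist_nonneg.trans_lt (mem_ball.mp hy)]

theorem mfun_pos {n : ℕ} (x : EuclideanSpace ℝ (Fin n)) : 0 < mfun x := by
  unfold mfun
  split_ifs with hx
  · exact one_pos
  · exact inv_pos.mpr (by linarith [not_le.mp hx])

theorem mfun_le_one {n : ℕ} (x : EuclideanSpace ℝ (Fin n)) : mfun x ≤ 1 := by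
  unfold mfun
  split_ifs with hx
  · exact le_rfl
  · exact inv_le_one_of_one_le₀ (not_le.mp hx).le

theorem mfun_mul_norm_le_one {n : ℕ} (x : EuclideanSpace ℝ (Fin n)) : mfun x * ‖x‖ ≤ 1 := by
  unfold mfun
  split_ifs with hx
  · simpa using hx
  · rw [inv_mul_cancel₀ (by linarith [not_le.mp hx])]

theorem le_and_mul_norm_le_of_le_mul_mfun {n : ℕ} {x : EuclideanSpace ℝ (Fin n)} {a r : ℝ}
    (hr0 : 0 ≤ r) (hr : r ≤ a * mfun x) : r ≤ a ∧ r * ‖x‖ ≤ a := by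
  have ha : 0 ≤ a := nonneg_of_mul_nonneg_left (hr0.trans hr) (mfun_pos x)
  constructor
  · calc r ≤ a * mfun x := hr
      _ ≤ a * 1 := by gcongr; exact mfun_le_one x
      _ = a := mul_one a
  · calc r * ‖x‖ ≤ a * mfun x * ‖x‖ := by gcongr
      _ = a * (mfun x * ‖x‖) := mul_assoc _ _ _
      _ ≤ a * 1 := by gcongr; exact mfun_mul_norm_le_one x
      _ = a := mul_one a

theorem gaussian_doubling_centred_general (n : ℕ) (a : ℝ) :
    ∃ d' > (0 : ℝ), ∀ (x : EuclideanSpace ℝ (Fin n)) (r : ℝ),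
      0 ≤ r → r ≤ a * mfun x →
      gaussMeasure n (ball x (2 * r)) ≤ ENNReal.ofReal d' * gaussMeasure n (ball x r) := by
  refine ⟨2 ^ n * Real.exp (2 * (2 * a + 2 * a ^ 2)), by positivity, fun x r hr0 hr => ?_⟩
  obtain ⟨hra, hrx⟩ := le_and_mul_norm_le_of_le_mul_mfun hr0 hr
  refine gaussMeasure_ball_two_mul_le x r _ fun y hy => ?_
  have hyx : ‖y - x‖ ≤ 2 * r := (mem_ball_iff_norm.mp hy).le
  have hsq : |‖y‖ ^ 2 - ‖x‖ ^ 2| ≤ 4 * r * ‖x‖ + 4 * r ^ 2 :=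
    calc |‖y‖ ^ 2 - ‖x‖ ^ 2| ≤ ‖y - x‖ * (‖y - x‖ + 2 * ‖x‖) := abs_sq_norm_sub_sq_norm_le x y
      _ ≤ 2 * r * (2 * r + 2 * ‖x‖) := by gcongr
      _ = 4 * r * ‖x‖ + 4 * r ^ 2 := by ring
  nlinarith

/-- gaussian doubling on admissible balls, centred form. -/
theorem gaussian_doubling_centred (n : ℕ) (a : ℝ) (ha : 0 < a) :
    ∃ d' > (0 : ℝ), ∀ (x : EuclideanSpace ℝ (Fin n)) (r : ℝ),
      0 ≤ r → r ≤ a * mfun x →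
      gaussMeasure n (ball x (2 * r)) ≤ ENNReal.ofReal d' * gaussMeasure n (ball x r) :=
  gaussian_doubling_centred_general n a

end
end

section
/- For all A, a > 0 and all x ∈ ℝⁿ, one has the cone inclusions Γ^{(A,a)}_x(γ) ⊆ Γ̃^{(A,c_{a,A})}_x(γ) and Γ̃^{(A,a)}_x(γ) ⊆ Γ^{(A,c_{a,A})}_x(γ), where c_{a,A} := a(1+aA). -/
open MeasureTheory Metric Set
open scoped ENNReal NNReal BigOperators

noncomputable section

/-! Since `m(x) = 1 / max(1, |x|)` and `max(1, |·|)` is 1-Lipschitz, a point `(y, t)` with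
`|y - x| < A t` and `t < a m(x)` satisfies
`t max(1, |y|) ≤ t max(1, |x|) + A t² < a + A a²`, i.e. `t < a (1 + a A) m(y)`.
The roles of `x` and `y` are symmetric, which gives both inclusions. -/

lemma mfun_eq_inv_max {n : ℕ} (x : EuclideanSpace ℝ (Fin n)) :
    mfun x = (max 1 ‖x‖)⁻¹ := by
  unfold mfun
  split
  · rw [max_eq_left ‹_›, inv_one]
  · rw [max_eq_right (le_of_not_ge ‹_›)]

lemma max_one_norm_le_add_dist {E : Type*} [SeminormedAddCommGroup E] (x y : E) :
    max 1 ‖y‖ ≤ max 1 ‖x‖ + dist y x :=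
  max_le (by linarith [le_max_left 1 ‖x‖, dist_nonneg (x := y) (y := x)])
    (by linarith [norm_le_norm_add_norm_sub' y x, dist_eq_norm y x, le_max_right 1 ‖x‖])

lemma lt_mul_mfun_of_dist_lt {n : ℕ} {A a t : ℝ} {x y : EuclideanSpace ℝ (Fin n)}
    (hd : dist y x < A * t) (ht : 0 < t) (hm : t < a * mfun x) :
    t < a * (1 + a * A) * mfun y := by
  have hM : 1 ≤ max 1 ‖x‖ := le_max_left _ _
  have hA : 0 < A := pos_of_mul_pos_left (dist_nonneg.trans_lt hd) ht.le
  rw [mfun_eq_inv_max, lt_mul_inv_iff₀ (by linarith)] at hm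
  rw [mfun_eq_inv_max, lt_mul_inv_iff₀ (by positivity)]
  have hta : t < a := by nlinarith
  calc t * max 1 ‖y‖ ≤ t * (max 1 ‖x‖ + A * t) :=
        mul_le_mul_of_nonneg_left ((max_one_norm_le_add_dist x y).trans (by linarith)) ht.le
    _ = t * max 1 ‖x‖ + A * (t * t) := by ring
    _ < a + A * (a * a) := add_lt_add hm (by gcongr)
    _ = a * (1 + a * A) := by ring

theorem cone_inclusions_general (n : ℕ) (A a : ℝ)
    (x : EuclideanSpace ℝ (Fin n)) :
    cone n A a x ⊆ coneT n A (a * (1 + a * A)) x ∧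
    coneT n A a x ⊆ cone n A (a * (1 + a * A)) x := by
  constructor
  · rintro ⟨y, t⟩ ⟨hd, ht, hm⟩
    exact ⟨hd, ht, lt_mul_mfun_of_dist_lt hd ht hm⟩
  · rintro ⟨y, t⟩ ⟨hd, ht, hm⟩
    exact ⟨hd, ht, lt_mul_mfun_of_dist_lt (dist_comm y x ▸ hd) ht hm⟩

/-- inclusions between the two kinds of admissible cones. -/
theorem cone_inclusions (n : ℕ) (A a : ℝ) (hA : 0 < A) (ha : 0 < a)
    (x : EuclideanSpace ℝ (Fin n)) :
    cone n A a x ⊆ coneT n A (a * (1 + a * A)) x ∧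
    coneT n A a x ⊆ cone n A (a * (1 + a * A)) x :=
  cone_inclusions_general n A a x

end
end
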